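/- arXiv:2302.03734 — 6 statements merged into one kernel-verified Lean document; each statement's English description precedes it below -/
import Mathlib

section
/- Let J ≥ 1 be an integer and let m_1, …, m_J be nonnegative integers with m = m_1 + ⋯ + m_J ≥ 1. Then ∏_{j=1}^J (m_j/m)^{m_j} / ∏_{j=1}^J Γ(m_j + 1/2) ≤ 1 / ( Γ(m + 1/2) · Γ(1/2)^{J−1} ). -/
open Finset

noncomputable def Dr (n : ℕ) : ℝ := ∏ k ∈ Finset.range n, ((k : ℝ) + 1/2)

lemma Dr_pos (n : ℕ) : 0 < Dr n :=
  Finset.prod_pos (fun k _ => by positivity)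

lemma Dr_succ (n : ℕ) : Dr (n+1) = Dr n * ((n:ℝ) + 1/2) :=
  Finset.prod_range_succ _ _

lemma npow_pos (n : ℕ) : (0:ℝ) < (n:ℝ)^n := by
  cases n with
  | zero => norm_num
  | succ k => positivity

lemma Gamma_nat_half (n : ℕ) :
    Real.Gamma ((n:ℝ) + 1/2) = Dr n * Real.Gamma (1/2) := by
  induction n with
  | zero => simp [Dr]
  | succ k ih =>
    have h : ((k:ℝ)+1/2) ≠ 0 := by positivity
    have e : ((k+1:ℕ):ℝ) + 1/2 = ((k:ℝ)+1/2) + 1 := by push_cast; ring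
    rw [e, Real.Gamma_add_one h, ih, Dr_succ]; ring

lemma trunc (y : ℝ) (hy0 : 0 ≤ y) (hy1 : y ≤ 1) (n : ℕ) :
    1 - n*y + (n*((n:ℝ)-1)/2)*y^2 - (n*((n:ℝ)-1)*((n:ℝ)-2)/6)*y^3 ≤ (1-y)^n := by
  induction n with
  | zero => norm_num
  | succ k ih =>
    have h1 : (0:ℝ) ≤ 1 - y := by linarith
    have h2 : (1 - (k:ℝ)*y + ((k:ℝ)*((k:ℝ)-1)/2)*y^2 - ((k:ℝ)*((k:ℝ)-1)*((k:ℝ)-2)/6)*y^3) * (1-y)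
        ≤ (1-y)^(k+1) := by
      rw [pow_succ]
      exact mul_le_mul_of_nonneg_right ih h1
    have h3 : (0:ℝ) ≤ (k:ℝ)*((k:ℝ)-1)*((k:ℝ)-2) := by
      rcases Nat.lt_or_ge k 2 with h | h
      · interval_cases k <;> norm_num
      · have h2k : (2:ℝ) ≤ (k:ℝ) := by exact_mod_cast h
        have a1 : (0:ℝ) ≤ (k:ℝ) := by linarith
        have a2 : (0:ℝ) ≤ (k:ℝ)-1 := by linarith
        have a3 : (0:ℝ) ≤ (k:ℝ)-2 := by linarith
        exact mul_nonneg (mul_nonneg a1 a2) a3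
    have h4 : (0:ℝ) ≤ (k:ℝ)*((k:ℝ)-1)*((k:ℝ)-2) * y^4 :=
      mul_nonneg h3 (by positivity)
    push_cast
    nlinarith [h2, h4]

lemma step (n : ℕ) :
    (2*(n:ℝ)+3)*((n:ℝ)+1)^(2*n+2) ≤ (2*(n:ℝ)+1)*(n:ℝ)^n*((n:ℝ)+2)^(n+2) := by
  obtain ⟨t, ht'⟩ : ∃ t : ℝ, t = (n:ℝ) := ⟨_, rfl⟩
  rw [← ht']
  have ht : 0 ≤ t := ht' ▸ Nat.cast_nonneg n
  have hsq : (0:ℝ) < (t+1)^2 := by positivity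
  obtain ⟨y, hy'⟩ : ∃ y : ℝ, y = 1/(t+1)^2 := ⟨_, rfl⟩
  have hy0 : 0 ≤ y := by rw [hy']; positivity
  have hy1 : y ≤ 1 := by
    rw [hy', div_le_one hsq]; nlinarith
  have hB : 1 - t*y + (t*(t-1)/2)*y^2 - (t*(t-1)*(t-2)/6)*y^3 ≤ (1-y)^n := by
    have := trunc y hy0 hy1 n
    rw [← ht'] at this
    exact this
  have key : (2*t+3)*(t+1)^2
      ≤ (2*t+1)*(t+2)^2 * (1 - t*y + (t*(t-1)/2)*y^2 - (t*(t-1)*(t-2)/6)*y^3) := by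
    have h6 : (0:ℝ) < ((t+1)^2)^3 := by positivity
    have expand : ((2*t+1)*(t+2)^2 * (1 - t*y + (t*(t-1)/2)*y^2 - (t*(t-1)*(t-2)/6)*y^3)
          - (2*t+3)*(t+1)^2) * ((t+1)^2)^3
        = 1 + (8/3)*t + 3*t^2 + (29/6)*t^3 + (10/3)*t^4 + t^5 + (1/6)*t^6 := by
      rw [hy']
      field_simp
      ring
    have hpoly : (0:ℝ) ≤ 1 + (8/3)*t + 3*t^2 + (29/6)*t^3 + (10/3)*t^4 + t^5 + (1/6)*t^6 := by
      have p2 := pow_nonneg ht 2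
      have p3 := pow_nonneg ht 3
      have p4 := pow_nonneg ht 4
      have p5 := pow_nonneg ht 5
      have p6 := pow_nonneg ht 6
      nlinarith
    have h0 : (0:ℝ) * ((t+1)^2)^3
        ≤ ((2*t+1)*(t+2)^2 * (1 - t*y + (t*(t-1)/2)*y^2 - (t*(t-1)*(t-2)/6)*y^3)
            - (2*t+3)*(t+1)^2) * ((t+1)^2)^3 := by
      rw [zero_mul, expand]; exact hpoly
    have := le_of_mul_le_mul_right h0 h6
    linarith
  have hfac : (0:ℝ) ≤ (2*t+1)*(t+2)^2 := by nlinarith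
  have key2 : (2*t+3)*(t+1)^2 ≤ (2*t+1)*(t+2)^2 * (1-y)^n :=
    key.trans (mul_le_mul_of_nonneg_left hB hfac)
  have hpn : (0:ℝ) ≤ ((t+1)^2)^n := by positivity
  have main := mul_le_mul_of_nonneg_right key2 hpn
  have e1 : (t+1)^(2*n+2) = ((t+1)^2)^n * (t+1)^2 := by
    rw [← pow_mul, ← pow_add]
  have hxy : (t+1)^2*(1-y) = t*(t+2) := by
    rw [hy']; field_simp; ring
  have e2 : ((t+1)^2)^n * (1-y)^n * (t+2)^2 = t^n*(t+2)^(n+2) := by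
    calc ((t+1)^2)^n * (1-y)^n * (t+2)^2 = ((t+1)^2*(1-y))^n * (t+2)^2 := by
          rw [mul_pow]
      _ = (t*(t+2))^n * (t+2)^2 := by rw [hxy]
      _ = t^n * ((t+2)^n * (t+2)^2) := by rw [mul_pow]; ring
      _ = t^n * (t+2)^(n+2) := by rw [← pow_add]
  calc (2*t+3)*(t+1)^(2*n+2) = (2*t+3)*(t+1)^2 * ((t+1)^2)^n := by rw [e1]; ring
    _ ≤ (2*t+1)*(t+2)^2*(1-y)^n * ((t+1)^2)^n := main
    _ = (2*t+1)*(((t+1)^2)^n * (1-y)^n * (t+2)^2) := by ring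
    _ = (2*t+1)*(t^n*(t+2)^(n+2)) := by rw [e2]
    _ = (2*t+1)*t^n*(t+2)^(n+2) := by ring

lemma f_antitone : Antitone (fun n : ℕ => (2*(n:ℝ)+1)*((n:ℝ)^n)/(((n:ℝ)+1)^(n+1))) := by
  apply antitone_nat_of_succ_le
  intro n
  have h1 : (0:ℝ) < (((n+1:ℕ):ℝ)+1)^(n+1+1) := by positivity
  have h2 : (0:ℝ) < ((n:ℝ)+1)^(n+1) := by positivity
  rw [div_le_div_iff₀ h1 h2]
  have e : (((n+1:ℕ):ℝ)) = (n:ℝ)+1 := by push_cast; ring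
  rw [e]
  have e2 : ((n:ℝ)+1)^(n+1) * ((n:ℝ)+1)^(n+1) = ((n:ℝ)+1)^(2*n+2) := by
    rw [← pow_add]; congr 1; omega
  have hs := step n
  calc (2*((n:ℝ)+1)+1)*((n:ℝ)+1)^(n+1)*((n:ℝ)+1)^(n+1)
      = (2*(n:ℝ)+3)*(((n:ℝ)+1)^(n+1) * ((n:ℝ)+1)^(n+1)) := by ring
    _ = (2*(n:ℝ)+3)*((n:ℝ)+1)^(2*n+2) := by rw [e2]
    _ ≤ (2*(n:ℝ)+1)*(n:ℝ)^n*((n:ℝ)+2)^(n+2) := hs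
    _ = (2*(n:ℝ)+1)*(n:ℝ)^n*(((n:ℝ)+1)+1)^(n+1+1) := by ring

lemma fmono' (b M : ℕ) (h : b ≤ M) :
    ((M:ℝ)+1/2)*((M:ℝ)^M)*(((b:ℝ)+1)^(b+1)) ≤ ((b:ℝ)+1/2)*(((M:ℝ)+1)^(M+1))*((b:ℝ)^b) := by
  have hf := f_antitone h
  dsimp only at hf
  have h1 : (0:ℝ) < ((M:ℝ)+1)^(M+1) := by positivity
  have h2 : (0:ℝ) < ((b:ℝ)+1)^(b+1) := by positivity
  rw [div_le_div_iff₀ h1 h2] at hf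
  linarith

lemma L2 (a b : ℕ) :
    (a:ℝ)^a * (b:ℝ)^b * Dr (a+b) ≤ ((a:ℝ)+(b:ℝ))^(a+b) * (Dr a * Dr b) := by
  induction b with
  | zero => simp [Dr]
  | succ b ih =>
    have hm : a + (b+1) = (a+b) + 1 := by omega
    rw [hm, Dr_succ, Dr_succ]
    have hf := fmono' b (a+b) (Nat.le_add_left b a)
    have hcast : ((a+b:ℕ):ℝ) = (a:ℝ)+(b:ℝ) := by push_cast; ring
    rw [hcast] at hf
    have hb : (0:ℝ) < (b:ℝ)^b := npow_pos b
    have hc : (0:ℝ) ≤ ((a:ℝ)+(b:ℝ)+1/2)*(((b:ℝ)+1)^(b+1)) := by positivity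
    have hd : (0:ℝ) ≤ Dr a * Dr b := le_of_lt (mul_pos (Dr_pos a) (Dr_pos b))
    have step1 := mul_le_mul_of_nonneg_right ih hc
    have step2 := mul_le_mul_of_nonneg_right hf hd
    have hcast2 : ((b+1:ℕ):ℝ) = (b:ℝ)+1 := by push_cast; ring
    rw [hcast2]
    apply le_of_mul_le_mul_right _ hb
    calc ((a:ℝ)^a * ((b:ℝ)+1)^(b+1) * (Dr (a+b) * (((a+b:ℕ):ℝ) + 1/2))) * (b:ℝ)^b
        = ((a:ℝ)^a * (b:ℝ)^b * Dr (a+b)) * (((a:ℝ)+(b:ℝ)+1/2)*(((b:ℝ)+1)^(b+1))) := by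
          rw [hcast]; ring
      _ ≤ (((a:ℝ)+(b:ℝ))^(a+b) * (Dr a * Dr b)) * (((a:ℝ)+(b:ℝ)+1/2)*(((b:ℝ)+1)^(b+1))) := step1
      _ = (((a:ℝ)+(b:ℝ))+1/2)*(((a:ℝ)+(b:ℝ))^(a+b))*(((b:ℝ)+1)^(b+1)) * (Dr a * Dr b) := by
          ring
      _ ≤ ((b:ℝ)+1/2)*(((a:ℝ)+(b:ℝ))+1)^((a+b)+1)*((b:ℝ)^b) * (Dr a * Dr b) := step2
      _ = (((a:ℝ)+((b:ℝ)+1))^(a+(b+1)) * (Dr a * (Dr b * ((b:ℝ)+1/2)))) * (b:ℝ)^b := by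
          rw [show a+(b+1) = (a+b)+1 from by omega]
          ring

lemma L3 {ι : Type*} [DecidableEq ι] (s : Finset ι) (m : ι → ℕ) :
    (∏ j ∈ s, (m j:ℝ)^(m j)) * Dr (∑ j ∈ s, m j)
      ≤ ((∑ j ∈ s, m j : ℕ):ℝ)^(∑ j ∈ s, m j) * ∏ j ∈ s, Dr (m j) := by
  induction s using Finset.induction with
  | empty => simp [Dr]
  | @insert a s ha ih =>
    rw [Finset.prod_insert ha, Finset.sum_insert ha, Finset.prod_insert ha]
    have hA : (0:ℝ) < (m a:ℝ)^(m a) := npow_pos _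
    have hDr : (0:ℝ) < Dr (m a + ∑ j ∈ s, m j) := Dr_pos _
    have hQ : (0:ℝ) < ∏ j ∈ s, Dr (m j) := Finset.prod_pos (fun j _ => Dr_pos _)
    have hS : (0:ℝ) < Dr (∑ j ∈ s, m j) := Dr_pos _
    have hl2 := L2 (m a) (∑ j ∈ s, m j)
    have step1 := mul_le_mul_of_nonneg_right ih
      (le_of_lt (mul_pos hA hDr))
    have step2 := mul_le_mul_of_nonneg_right hl2 (le_of_lt hQ)
    apply le_of_mul_le_mul_right _ hS
    have hcast : ((m a + ∑ j ∈ s, m j : ℕ):ℝ) = (m a:ℝ) + ((∑ j ∈ s, m j : ℕ):ℝ) := by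
      push_cast; ring
    calc ((m a:ℝ)^(m a) * ∏ j ∈ s, (m j:ℝ)^(m j)) * Dr (m a + ∑ j ∈ s, m j) * Dr (∑ j ∈ s, m j)
        = ((∏ j ∈ s, (m j:ℝ)^(m j)) * Dr (∑ j ∈ s, m j)) * ((m a:ℝ)^(m a) * Dr (m a + ∑ j ∈ s, m j)) := by ring
      _ ≤ (((∑ j ∈ s, m j : ℕ):ℝ)^(∑ j ∈ s, m j) * ∏ j ∈ s, Dr (m j)) * ((m a:ℝ)^(m a) * Dr (m a + ∑ j ∈ s, m j)) := step1
      _ = ((m a:ℝ)^(m a) * ((∑ j ∈ s, m j : ℕ):ℝ)^(∑ j ∈ s, m j) * Dr (m a + ∑ j ∈ s, m j)) * ∏ j ∈ s, Dr (m j) := by ring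
      _ ≤ (((m a:ℝ) + ((∑ j ∈ s, m j : ℕ):ℝ))^(m a + ∑ j ∈ s, m j) * (Dr (m a) * Dr (∑ j ∈ s, m j))) * ∏ j ∈ s, Dr (m j) := step2
      _ = ((m a + ∑ j ∈ s, m j : ℕ):ℝ)^(m a + ∑ j ∈ s, m j) * (Dr (m a) * ∏ j ∈ s, Dr (m j)) * Dr (∑ j ∈ s, m j) := by
          rw [hcast]; ring

/-- For integers `m = m₁ + ⋯ + m_J` (with `J ≥ 1`, `m ≥ 1`),
`∏ⱼ (mⱼ/m)^{mⱼ} / ∏ⱼ Γ(mⱼ + 1/2) ≤ 1 / (Γ(m + 1/2) · Γ(1/2)^{J-1})`. -/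
theorem gamma_ratio_bound (J : ℕ) (hJ : 1 ≤ J) (m : Fin J → ℕ)
    (hm : 1 ≤ ∑ j, m j) :
    (∏ j, ((m j : ℝ) / ((∑ j, m j : ℕ) : ℝ)) ^ (m j)) /
        (∏ j, Real.Gamma ((m j : ℝ) + 1 / 2)) ≤
      1 / (Real.Gamma (((∑ j, m j : ℕ) : ℝ) + 1 / 2) *
        Real.Gamma (1 / 2) ^ (J - 1)) := by
  have hG : (0:ℝ) < Real.Gamma (1/2) := Real.Gamma_pos_of_pos (by norm_num)
  have hGamma : ∀ n : ℕ, Real.Gamma ((n:ℝ) + 1/2) = Dr n * Real.Gamma (1/2) :=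
    Gamma_nat_half
  set M : ℕ := ∑ j, m j with hM
  have hMpos : (0:ℝ) < (M:ℝ) := by exact_mod_cast hm
  have hMM : (0:ℝ) < (M:ℝ)^M := by positivity
  have hP : (0:ℝ) < ∏ j, (m j:ℝ)^(m j) := Finset.prod_pos (fun j _ => npow_pos _)
  have hQ : (0:ℝ) < ∏ j, Dr (m j) := Finset.prod_pos (fun j _ => Dr_pos _)
  have hDrM : (0:ℝ) < Dr M := Dr_pos M
  -- rewrite numerator product
  have enum : (∏ j, ((m j : ℝ) / (M:ℝ)) ^ (m j))
      = (∏ j, (m j:ℝ)^(m j)) / (M:ℝ)^M := by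
    simp only [div_pow]
    rw [Finset.prod_div_distrib, Finset.prod_pow_eq_pow_sum]
  have eden : (∏ j, Real.Gamma ((m j:ℝ) + 1/2))
      = (∏ j, Dr (m j)) * Real.Gamma (1/2) ^ J := by
    calc (∏ j, Real.Gamma ((m j:ℝ) + 1/2)) = ∏ j, (Dr (m j) * Real.Gamma (1/2)) := by
          exact Finset.prod_congr rfl (fun j _ => hGamma (m j))
      _ = (∏ j, Dr (m j)) * ∏ _j : Fin J, Real.Gamma (1/2) := Finset.prod_mul_distrib
      _ = (∏ j, Dr (m j)) * Real.Gamma (1/2) ^ J := by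
          rw [Finset.prod_const, Finset.card_univ, Fintype.card_fin]
  have erhs : Real.Gamma ((M:ℝ) + 1/2) * Real.Gamma (1/2) ^ (J-1)
      = Dr M * Real.Gamma (1/2) ^ J := by
    rw [hGamma M]
    have : Real.Gamma (1/2) * Real.Gamma (1/2)^(J-1) = Real.Gamma (1/2)^J := by
      rw [← pow_succ']
      congr 1
      omega
    rw [mul_assoc, this]
  rw [enum, eden, erhs]
  have hGJ : (0:ℝ) < Real.Gamma (1/2) ^ J := by positivity
  rw [div_le_div_iff₀ (by positivity) (by positivity)]
  have key : (∏ j, (m j:ℝ)^(m j)) * Dr M ≤ (M:ℝ)^M * ∏ j, Dr (m j) := by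
    have := L3 (Finset.univ : Finset (Fin J)) m
    exact this
  calc (∏ j, (m j:ℝ)^(m j)) / (M:ℝ)^M * (Dr M * Real.Gamma (1/2) ^ J)
      = ((∏ j, (m j:ℝ)^(m j)) * Dr M) * Real.Gamma (1/2) ^ J / (M:ℝ)^M := by ring
    _ ≤ ((M:ℝ)^M * ∏ j, Dr (m j)) * Real.Gamma (1/2) ^ J / (M:ℝ)^M := by
        gcongr
    _ = 1 * ((∏ j, Dr (m j)) * Real.Gamma (1/2) ^ J) := by
        field_simp
end

section
/- For every real y ≥ 0, every integer J ≥ 1, and all nonnegative integers m_1, …, m_J with m = m_1 + ⋯ + m_J ≥ 1, one has ∏_{i=1}^{m} ( y + i/m ) ≤ ∏_{j=1}^{J} ∏_{i=1}^{m_j} ( y + i/m_j ), where an empty product equals 1. -/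
open Finset

/-! Put all the fractions `i / mⱼ` (`1 ≤ i ≤ mⱼ`, all `j`) into one family of `n = ∑ mⱼ` numbers.
Block `j` has at most `k mⱼ / n` of them below `k / n`, strictly fewer when `mⱼ > 0`,
so fewer than `k` of the whole family lie below `k / n`: its `k`-th smallest member is at
least `k / n`, and the two products compare factor by factor once both are sorted. -/

theorem Finset.prod_range_le_prod_of_card_filter_lt_le {ι R : Type*} [CommSemiring R]
    [LinearOrder R] [IsStrictOrderedRing R] (s : Finset ι) (f : ι → R) (t : ℕ → R)
    (ht : ∀ k, 0 ≤ t k) (h : ∀ k < #s, #{x ∈ s | f x < t k} ≤ k) :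
    ∏ k ∈ range #s, t k ≤ ∏ x ∈ s, f x := by
  classical
  induction s using Finset.induction_on_max_value f with
  | empty => simp
  | insert a s ha hmax ih =>
    have hcard : #(insert a s) = #s + 1 := card_insert_of_notMem ha
    rw [hcard] at h
    have ih := ih fun k hk =>
      (card_le_card (filter_subset_filter _ (subset_insert a s))).trans (h k (by omega))
    have hta : t #s ≤ f a := by
      by_contra! hlt
      have hall : #{x ∈ insert a s | f x < t #s} = #s + 1 := by
        rw [filter_true_of_mem fun x hx => ?_, hcard]
        rcases mem_insert.mp hx with rfl | hx
        exacts [hlt, (hmax x hx).trans_lt hlt]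
      have := h #s (Nat.lt_succ_self _)
      omega
    rw [hcard, prod_range_succ, prod_insert ha, mul_comm]
    exact mul_le_mul hta ih (prod_nonneg fun k _ => ht k) ((ht _).trans hta)

theorem card_filter_succ_div_lt {m : ℕ} (hm : 0 < m) {τ : ℝ} (hτ : 0 < τ) :
    (#{i ∈ range m | ((i : ℕ) + 1 : ℝ) / m < τ} : ℝ) < τ * m := by
  have hm' : (0 : ℝ) < m := Nat.cast_pos.mpr hm
  set x := τ * m
  have hx : 0 < x := mul_pos hτ hm'
  have hsub : {i ∈ range m | ((i : ℕ) + 1 : ℝ) / m < τ} ⊆ range (⌈x⌉₊ - 1) := by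
    intro i hi
    have hi : (i : ℝ) + 1 < x := (div_lt_iff₀ hm').mp (mem_filter.mp hi).2
    have : i + 1 < ⌈x⌉₊ := by exact_mod_cast hi.trans_le (Nat.le_ceil x)
    simp only [mem_range]; omega
  calc (#{i ∈ range m | ((i : ℕ) + 1 : ℝ) / m < τ} : ℝ) ≤ ((⌈x⌉₊ - 1 : ℕ) : ℝ) := by
        exact_mod_cast (card_le_card hsub).trans_eq (card_range _)
    _ < x := by
        rw [Nat.cast_sub (Nat.ceil_pos.mpr hx), Nat.cast_one, sub_lt_iff_lt_add]
        exact Nat.ceil_lt_add_one hx.le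

theorem card_filter_sigma_succ_div_lt_le {ι : Type*} [Fintype ι] (m : ι → ℕ) {k : ℕ}
    (hk : k < ∑ j, m j) :
    #{p ∈ univ.sigma fun j => range (m j) |
        ((p.2 : ℕ) + 1 : ℝ) / m p.1 < ((k : ℝ) + 1) / (∑ j, m j : ℕ)} ≤ k := by
  set n := ∑ j, m j
  set τ : ℝ := ((k : ℝ) + 1) / n
  have hn : (0 : ℝ) < n := by exact_mod_cast (Nat.zero_le k).trans_lt hk
  have hτ : 0 < τ := by positivity
  obtain ⟨j₀, -, hj₀⟩ := exists_ne_zero_of_sum_ne_zero (s := univ) (f := m) (by omega)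
  rw [filter_sigma, card_sigma, ← Nat.lt_succ_iff, ← Nat.cast_lt (α := ℝ), Nat.cast_sum]
  calc ∑ j, (#{i ∈ range (m j) | ((i : ℕ) + 1 : ℝ) / m j < τ} : ℝ) < ∑ j, τ * m j := by
        refine sum_lt_sum (fun j _ => ?_)
          ⟨j₀, mem_univ _, card_filter_succ_div_lt (Nat.pos_of_ne_zero hj₀) hτ⟩
        rcases (m j).eq_zero_or_pos with hj | hj
        · simp [hj]
        · exact (card_filter_succ_div_lt hj hτ).le
    _ = (k.succ : ℝ) := by
        rw [← mul_sum, ← Nat.cast_sum, div_mul_cancel₀ _ hn.ne', Nat.cast_succ]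

theorem davisson_product_inequality_general (y : ℝ) (hy : 0 ≤ y) (J : ℕ)
    (m : Fin J → ℕ) :
    ∏ i ∈ Finset.range (∑ j, m j), (y + ((i : ℝ) + 1) / ((∑ j, m j : ℕ) : ℝ)) ≤
      ∏ j, ∏ i ∈ Finset.range (m j), (y + ((i : ℝ) + 1) / (m j : ℝ)) := by
  have key := prod_range_le_prod_of_card_filter_lt_le (univ.sigma fun j => range (m j))
    (fun p => y + ((p.2 : ℕ) + 1 : ℝ) / m p.1) (fun k => y + ((k : ℝ) + 1) / (∑ j, m j : ℕ))
    (fun k => by positivity) fun k hk => by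
      simp only [card_sigma, card_range] at hk
      simpa only [add_lt_add_iff_left] using card_filter_sigma_succ_div_lt_le m hk
  simpa only [card_sigma, card_range, prod_sigma] using key

/-- For `y ≥ 0`, `J ≥ 1` and nonnegative integers `m₁, …, m_J` with
`m = m₁ + ⋯ + m_J ≥ 1`, one has
`∏_{i=1}^{m} (y + i/m) ≤ ∏_{j=1}^{J} ∏_{i=1}^{mⱼ} (y + i/mⱼ)`,
where an empty product equals 1. -/
theorem davisson_product_inequality (y : ℝ) (hy : 0 ≤ y) (J : ℕ) (hJ : 1 ≤ J)
    (m : Fin J → ℕ) (hm : 1 ≤ ∑ j, m j) :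
    ∏ i ∈ Finset.range (∑ j, m j), (y + ((i : ℝ) + 1) / ((∑ j, m j : ℕ) : ℝ)) ≤
      ∏ j, ∏ i ∈ Finset.range (m j), (y + ((i : ℝ) + 1) / (m j : ℝ)) :=
  davisson_product_inequality_general y hy J m
end

section
/- Let n ≥ 3 and k ≥ 1 be integers, let x ∈ ℕ^{n×n} be a symmetric matrix with x_{ij} ≤ log n for all i, j ∈ [n], and let z ∈ {1,…,k}^n be such that for every a ∈ {1,…,k} one has n_a(z) ≥ 1 and d^t_a(x,z) ≥ max(n_a(z), 3). Then ∏_{a=1}^{k} [ Γ(1/2)^{n_a(z)} · Γ( d^t_a(x,z) + n_a(z)/2 ) / Γ( n_a(z)/2 ) · ∏_{i : z_i = a} ( ( d_i(x) / d^t_a(x,z) )^{d_i(x)} / Γ( d_i(x) + 1/2 ) ) ] ≤ ( n² · log n )^{n}. -/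
/-!
Write `m = n_a(z)`, `D = d^t_a(x,z)` and `s = m / 2`. Stirling's lower bound for `d!` together with
the log-convexity estimate `Γ(d + 1) ≤ Γ(d + 1/2) √(d + 1/2)` gives `√π d^d ≤ e^d Γ(d + 1/2)` for every
vertex, so the factor of community `a` is at most `Γ(s + D) e^D / (Γ(s) D^D)`. Expanding
`Γ(s + D) = Γ(s) s (s + 1) ⋯ (s + D - 1)` and using `s ≤ e^(s-1)`, `s + j ≤ j e^(s/j)` bounds this by
`(D - 1)! e^(s - 1 + s H_(D-1)) e^D / D^D`, which Stirling's upper bound and `H_(D-1) ≤ 1 + log D`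
turn into `(e² D)^s`. Since `D ≤ n² log n` and `e² ≤ n² log n` for `n ≥ 3`, each community
contributes at most `(n² log n)^m`, and the `m` add up to `n`.
-/

open Finset

/-- `n_a(z)`: number of vertices in community `a`. -/
def nCount {n k : ℕ} (z : Fin n → Fin k) (a : Fin k) : ℕ :=
  (Finset.univ.filter fun i => z i = a).card

/-- `d_i(x)`: degree of node `i`. -/
def deg {n : ℕ} (x : Fin n → Fin n → ℕ) (i : Fin n) : ℕ := ∑ j, x i j

/-- `d^t_a(x,z)`: total degree of community `a`. -/
def degT {n k : ℕ} (x : Fin n → Fin n → ℕ) (z : Fin n → Fin k) (a : Fin k) : ℕ :=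
  ∑ i ∈ Finset.univ.filter (fun i => z i = a), deg x i

open Real
open scoped Nat

theorem Real.Gamma_add_nat_eq_mul_prod {s : ℝ} (hs : 0 < s) (D : ℕ) :
    Gamma (s + D) = Gamma s * ∏ j ∈ range D, (s + j) := by
  induction D with
  | zero => simp
  | succ D ih =>
    rw [Nat.cast_succ, ← add_assoc, Gamma_add_one (by positivity), ih, prod_range_succ]
    ring

theorem prod_range_add_le_factorial_mul_exp {s : ℝ} (hs : 0 ≤ s) (d : ℕ) :
    ∏ j ∈ range (d + 1), (s + j) ≤ d ! * exp (s - 1 + s * harmonic d) := by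
  have hfirst : s ≤ exp (s - 1) := by linarith [add_one_le_exp (s - 1)]
  have hstep (i : ℕ) : s + ((i + 1 : ℕ) : ℝ) ≤ ((i + 1 : ℕ) : ℝ) * exp (s / (i + 1 : ℕ)) := by
    have hi : (0 : ℝ) < (i + 1 : ℕ) := by positivity
    have := mul_le_mul_of_nonneg_left (add_one_le_exp (s / (i + 1 : ℕ))) hi.le
    rw [mul_add, mul_div_cancel₀ _ hi.ne', mul_one] at this
    linarith
  have hharmonic : s * (harmonic d : ℝ) = ∑ i ∈ range d, s / (i + 1 : ℕ) := by
    simp only [harmonic, Rat.cast_sum, Rat.cast_inv, Rat.cast_natCast, mul_sum, div_eq_mul_inv]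
  calc ∏ j ∈ range (d + 1), (s + j)
      = (∏ i ∈ range d, (s + ((i + 1 : ℕ) : ℝ))) * s := by rw [prod_range_succ']; simp
    _ ≤ (∏ i ∈ range d, ((i + 1 : ℕ) : ℝ) * exp (s / (i + 1 : ℕ))) * exp (s - 1) := by
        gcongr with i
        exact hstep i
    _ = d ! * exp (s - 1 + s * harmonic d) := by
        rw [prod_mul_distrib, ← exp_sum, ← hharmonic, exp_add, ← prod_range_add_one_eq_factorial]
        push_cast
        ring

theorem factorial_le_exp_one_mul_sqrt_mul_pow {n : ℕ} (hn : n ≠ 0) :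
    (n ! : ℝ) ≤ exp 1 * √n * (n / exp 1) ^ n := by
  obtain ⟨d, rfl⟩ := Nat.exists_eq_add_one_of_ne_zero hn
  have h := Stirling.stirlingSeq'_antitone (Nat.zero_le d)
  simp only [Function.comp, Nat.succ_eq_add_one, zero_add, Stirling.stirlingSeq_one] at h
  rw [Stirling.stirlingSeq, div_le_div_iff₀ (by positivity) (by positivity), sqrt_mul zero_le_two,
    mul_comm] at h
  refine le_of_mul_le_mul_left ?_ (by positivity : (0 : ℝ) < √2)
  linarith

theorem factorial_mul_exp_succ_le (d : ℕ) :
    (d ! : ℝ) * exp (d + 1 : ℕ) ≤ exp 1 * (d + 1 : ℕ) ^ (d + 1) := by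
  have hstirling := factorial_le_exp_one_mul_sqrt_mul_pow d.succ_ne_zero
  rw [Nat.factorial_succ, Nat.cast_mul, div_pow, ← exp_nat_mul, mul_one] at hstirling
  set D : ℝ := ((d + 1 : ℕ) : ℝ)
  have hD : 1 ≤ D := by simp [D]
  have hsqrt : √D ≤ D := by
    rw [sqrt_le_left (by positivity)]
    nlinarith
  rw [mul_div_assoc', le_div_iff₀ (exp_pos D)] at hstirling
  refine le_of_mul_le_mul_left ?_ (by positivity : 0 < D)
  calc D * (d ! * exp D) = D * d ! * exp D := by ring
    _ ≤ exp 1 * √D * D ^ (d + 1) := hstirling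
    _ ≤ exp 1 * D * D ^ (d + 1) := by gcongr
    _ = D * (exp 1 * D ^ (d + 1)) := by ring

theorem Real.Gamma_add_nat_mul_exp_le {s : ℝ} (hs : 0 < s) {D : ℕ} (hD : D ≠ 0) :
    Gamma (s + D) * exp D ≤ Gamma s * D ^ D * (exp 2 * D) ^ s := by
  obtain ⟨d, rfl⟩ := Nat.exists_eq_add_one_of_ne_zero hD
  have hharmonic : (harmonic d : ℝ) ≤ 1 + log (d + 1 : ℕ) := by
    refine le_trans ?_ (harmonic_le_one_add_log (d + 1))
    rw [harmonic_succ, Rat.cast_add, le_add_iff_nonneg_right]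
    positivity
  have hrpow : (exp 2 * (d + 1 : ℕ)) ^ s = exp ((2 + log (d + 1 : ℕ)) * s) := by
    rw [rpow_def_of_pos (by positivity), log_mul (by positivity) (by positivity), log_exp]
  calc Gamma (s + (d + 1 : ℕ)) * exp (d + 1 : ℕ)
      = Gamma s * (∏ j ∈ range (d + 1), (s + j)) * exp (d + 1 : ℕ) := by
        rw [Gamma_add_nat_eq_mul_prod hs]
    _ ≤ Gamma s * (d ! * exp (s - 1 + s * (1 + log (d + 1 : ℕ)))) * exp (d + 1 : ℕ) := by
        gcongr
        refine (prod_range_add_le_factorial_mul_exp hs.le d).trans ?_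
        gcongr
    _ = Gamma s * (d ! * exp (d + 1 : ℕ)) * exp ((2 + log (d + 1 : ℕ)) * s) / exp 1 := by
        rw [show s - 1 + s * (1 + log (d + 1 : ℕ)) = (2 + log (d + 1 : ℕ)) * s - 1 by ring, exp_sub]
        field_simp
    _ ≤ Gamma s * (exp 1 * (d + 1 : ℕ) ^ (d + 1)) * exp ((2 + log (d + 1 : ℕ)) * s) / exp 1 := by
        gcongr Gamma s * ?_ * _ / _
        exact factorial_mul_exp_succ_le d
    _ = Gamma s * (d + 1 : ℕ) ^ (d + 1) * (exp 2 * (d + 1 : ℕ)) ^ s := by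
        rw [hrpow]
        field_simp

theorem Real.Gamma_add_half_le_mul_sqrt {x : ℝ} (hx : 0 < x) :
    Gamma (x + 1 / 2) ≤ Gamma x * √x := by
  have h := Gamma_mul_add_mul_le_rpow_Gamma_mul_rpow_Gamma hx (by linarith : 0 < x + 1)
    one_half_pos one_half_pos (add_halves 1)
  rwa [show 1 / 2 * x + 1 / 2 * (x + 1) = x + 1 / 2 by ring, Gamma_add_one hx.ne',
    mul_rpow hx.le (Gamma_pos_of_pos hx).le, mul_left_comm, ← rpow_add (Gamma_pos_of_pos hx),
    add_halves, rpow_one, ← sqrt_eq_rpow, mul_comm] at h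

theorem sqrt_pi_mul_pow_le_exp_mul_Gamma_add_half (d : ℕ) :
    √π * d ^ d ≤ exp d * Gamma (d + 1 / 2) := by
  rcases Nat.eq_zero_or_pos d with rfl | hd
  · simp only [Nat.cast_zero, pow_zero, mul_one, exp_zero, one_mul, zero_add, Gamma_one_half_eq,
      le_refl]
  have hd' : (1 : ℝ) ≤ d := by exact_mod_cast hd
  have hfactorial : (d ! : ℝ) ≤ Gamma (d + 1 / 2) * √(2 * d) := by
    calc (d ! : ℝ) = Gamma ((d + 1 / 2) + 1 / 2) := by
          rw [add_assoc, add_halves, Gamma_nat_eq_factorial]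
      _ ≤ Gamma (d + 1 / 2) * √(d + 1 / 2) := Gamma_add_half_le_mul_sqrt (by positivity)
      _ ≤ Gamma (d + 1 / 2) * √(2 * d) := by gcongr; linarith
  have hstirling := Stirling.le_factorial_stirling d
  rw [mul_comm 2 π, mul_assoc, sqrt_mul pi_pos.le, div_pow] at hstirling
  have := hstirling.trans hfactorial
  rw [mul_div_assoc', div_le_iff₀ (by positivity), ← exp_nat_mul, mul_one] at this
  refine le_of_mul_le_mul_right ?_ (by positivity : 0 < √(2 * d))
  linarith

theorem community_factor_le {ι : Type*} (S : Finset ι) (d : ι → ℕ) {D : ℕ}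
    (hDsum : ∑ i ∈ S, d i = D) (hD : D ≠ 0) :
    Gamma (1 / 2) ^ #S * Gamma (D + (#S : ℝ) / 2) / Gamma ((#S : ℝ) / 2) *
        ∏ i ∈ S, ((d i : ℝ) / D) ^ d i / Gamma (d i + 1 / 2) ≤
      (exp 2 * D) ^ ((#S : ℝ) / 2) := by
  have hs : 0 < (#S : ℝ) / 2 := by
    have : S.Nonempty := nonempty_of_sum_ne_zero (hDsum ▸ hD)
    positivity
  have hvertex (i : ι) :
      √π * (((d i : ℝ) / D) ^ d i / Gamma (d i + 1 / 2)) ≤ exp (d i) / D ^ d i := by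
    rw [div_pow, div_div, mul_div_assoc', div_le_div_iff₀ (by positivity) (by positivity),
      mul_comm (_ ^ _ : ℝ), ← mul_assoc]
    exact mul_le_mul_of_nonneg_right (sqrt_pi_mul_pow_le_exp_mul_Gamma_add_half (d i))
      (by positivity)
  have hvertices : Gamma (1 / 2) ^ #S * ∏ i ∈ S, ((d i : ℝ) / D) ^ d i / Gamma (d i + 1 / 2) ≤
      exp D / D ^ D := by
    calc Gamma (1 / 2) ^ #S * ∏ i ∈ S, ((d i : ℝ) / D) ^ d i / Gamma (d i + 1 / 2)
        = ∏ i ∈ S, √π * (((d i : ℝ) / D) ^ d i / Gamma (d i + 1 / 2)) := by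
          rw [Gamma_one_half_eq, prod_mul_distrib, prod_const]
      _ ≤ ∏ i ∈ S, exp (d i) / (D : ℝ) ^ d i := prod_le_prod (fun i _ => by positivity)
          (fun i _ => hvertex i)
      _ = exp D / D ^ D := by
          rw [prod_div_distrib, ← exp_sum, prod_pow_eq_pow_sum, hDsum, ← hDsum]
          push_cast
          rfl
  have hgamma := Gamma_add_nat_mul_exp_le hs hD
  calc Gamma (1 / 2) ^ #S * Gamma (D + (#S : ℝ) / 2) / Gamma ((#S : ℝ) / 2) *
        ∏ i ∈ S, ((d i : ℝ) / D) ^ d i / Gamma (d i + 1 / 2)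
      = Gamma ((#S : ℝ) / 2 + D) / Gamma ((#S : ℝ) / 2) *
          (Gamma (1 / 2) ^ #S * ∏ i ∈ S, ((d i : ℝ) / D) ^ d i / Gamma (d i + 1 / 2)) := by
        rw [add_comm]; ring
    _ ≤ Gamma ((#S : ℝ) / 2 + D) / Gamma ((#S : ℝ) / 2) * (exp D / D ^ D) := by
        gcongr
    _ ≤ (exp 2 * D) ^ ((#S : ℝ) / 2) := by
        rw [div_mul_div_comm, div_le_iff₀ (by positivity)]
        linarith

theorem exp_two_le_sq_mul_log {n : ℕ} (hn : 3 ≤ n) : exp 2 ≤ (n : ℝ) ^ 2 * log n := by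
  have hn' : (3 : ℝ) ≤ n := by exact_mod_cast hn
  have he : exp 1 ≤ 3 := by linarith [exp_one_lt_d9]
  have hlog : 1 ≤ log n := by
    rw [le_log_iff_exp_le (by positivity)]
    linarith
  calc exp 2 = exp 1 ^ 2 := by rw [← exp_nat_mul]; norm_num
    _ ≤ (n : ℝ) ^ 2 * 1 := by rw [mul_one]; gcongr; linarith
    _ ≤ (n : ℝ) ^ 2 * log n := by gcongr

theorem sum_nCount {n k : ℕ} (z : Fin n → Fin k) : ∑ a, nCount z a = n := by
  simpa [nCount] using
    (card_eq_sum_card_fiberwise (s := univ) (t := univ) fun i _ => mem_univ (z i)).symm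

theorem degT_le {n k : ℕ} {x : Fin n → Fin n → ℕ} {L : ℝ} (hx : ∀ i j, (x i j : ℝ) ≤ L)
    (z : Fin n → Fin k) (a : Fin k) : (degT x z a : ℝ) ≤ n ^ 2 * L := by
  calc (degT x z a : ℝ) ≤ ∑ i, (deg x i : ℝ) := by
        exact_mod_cast sum_le_sum_of_subset (filter_subset _ _)
    _ ≤ ∑ _i : Fin n, ∑ _j : Fin n, L := by
        simp only [deg, Nat.cast_sum]
        gcongr
        exact hx _ _
    _ = n ^ 2 * L := by simp; ring

theorem ratio_B_bound_general (n k : ℕ) (hn : 3 ≤ n)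
    (x : Fin n → Fin n → ℕ)
    (hx : ∀ i j, (x i j : ℝ) ≤ Real.log n) (z : Fin n → Fin k)
    (hda : ∀ a, max (nCount z a) 3 ≤ degT x z a) :
    ∏ a : Fin k,
        (Real.Gamma (1 / 2) ^ (nCount z a) *
          Real.Gamma ((degT x z a : ℝ) + (nCount z a : ℝ) / 2) /
          Real.Gamma ((nCount z a : ℝ) / 2) *
          ∏ i ∈ Finset.univ.filter (fun i => z i = a),
            ((deg x i : ℝ) / (degT x z a : ℝ)) ^ (deg x i) /
              Real.Gamma ((deg x i : ℝ) + 1 / 2)) ≤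
      ((n : ℝ) ^ 2 * Real.log n) ^ n := by
  set N := (n : ℝ) ^ 2 * log n
  have hN : exp 2 ≤ N := exp_two_le_sq_mul_log hn
  refine (prod_le_prod (fun a _ => by positivity) fun a _ => ?_).trans_eq
    (by rw [prod_pow_eq_pow_sum, sum_nCount z])
  calc _ ≤ (exp 2 * degT x z a) ^ ((nCount z a : ℝ) / 2) :=
        community_factor_le _ (deg x) rfl (by have := hda a; omega)
    _ ≤ (N ^ 2) ^ ((nCount z a : ℝ) / 2) := by
        rw [sq]
        gcongr
        exact degT_le hx z a
    _ = N ^ nCount z a := by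
        rw [← rpow_natCast, ← rpow_mul (by positivity), Nat.cast_ofNat,
          mul_div_cancel₀ _ two_ne_zero, rpow_natCast]

/-- bound on the ratio `B̂(x,z)/B(x,z)` for good networks. -/
theorem ratio_B_bound (n k : ℕ) (hn : 3 ≤ n) (hk : 1 ≤ k)
    (x : Fin n → Fin n → ℕ) (hsym : ∀ i j, x i j = x j i)
    (hx : ∀ i j, (x i j : ℝ) ≤ Real.log n) (z : Fin n → Fin k)
    (hna : ∀ a, 1 ≤ nCount z a)
    (hda : ∀ a, max (nCount z a) 3 ≤ degT x z a) :
    ∏ a : Fin k,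
        (Real.Gamma (1 / 2) ^ (nCount z a) *
          Real.Gamma ((degT x z a : ℝ) + (nCount z a : ℝ) / 2) /
          Real.Gamma ((nCount z a : ℝ) / 2) *
          ∏ i ∈ Finset.univ.filter (fun i => z i = a),
            ((deg x i : ℝ) / (degT x z a : ℝ)) ^ (deg x i) /
              Real.Gamma ((deg x i : ℝ) + 1 / 2)) ≤
      ((n : ℝ) ^ 2 * Real.log n) ^ n :=
  ratio_B_bound_general n k hn x hx z hda
end

section
/- Let 1 ≤ k ≤ k_0 be integers, let π ∈ ℝ^{k_0} have strictly positive entries with Σ_a π_a = 1, let λ ∈ ℝ^{k_0×k_0} be symmetric with strictly positive entries, and let h : {1,…,k_0} → {1,…,k} be surjective. Then F(π, λ) ≥ F(π*, λ*), where (π*, λ*) are the parameters obtained by merging the communities according to h. -/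
open Finset

/-- `[Lp]_a = Σ_b L_{ab} p_b`. -/
def rowSum {m : ℕ} (L : Fin m → Fin m → ℝ) (p : Fin m → ℝ) (a : Fin m) : ℝ :=
  ∑ b, L a b * p b

/-- `F(p, L) = Σ_{a,b} p_a p_b L_{ab} log(L_{ab} / ([Lp]_a [Lp]_b))`. -/
noncomputable def F {m : ℕ} (p : Fin m → ℝ) (L : Fin m → Fin m → ℝ) : ℝ :=
  ∑ a, ∑ b, p a * p b * L a b *
    Real.log (L a b / (rowSum L p a * rowSum L p b))

/-- Merged probability vector `π*_c = Σ_{a : h(a) = c} π_a`. -/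
def mergedPi {k0 k : ℕ} (h : Fin k0 → Fin k) (p : Fin k0 → ℝ) (c : Fin k) : ℝ :=
  ∑ a ∈ Finset.univ.filter (fun a => h a = c), p a

/-- Merged connectivity matrix
`λ*_{cd} = (Σ_{a : h(a)=c} Σ_{b : h(b)=d} π_a π_b λ_{ab}) / (π*_c π*_d)`. -/
noncomputable def mergedLambda {k0 k : ℕ} (h : Fin k0 → Fin k)
    (p : Fin k0 → ℝ) (L : Fin k0 → Fin k0 → ℝ) (c d : Fin k) : ℝ :=
  (∑ a ∈ Finset.univ.filter (fun a => h a = c),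
      ∑ b ∈ Finset.univ.filter (fun b => h b = d), p a * p b * L a b) /
    (mergedPi h p c * mergedPi h p d)

/-!
With edge masses `w_{ab} = π_a π_b λ_{ab}` and node masses `r_a = π_a [λπ]_a = Σ_b w_{ab}`,
one has `F(π, λ) = Σ_{a,b} w_{ab} log (w_{ab} / (r_a r_b))`. Merging by `h` replaces `w` and `r`
by their sums over the fibres of `h × h` and of `h`, so the inequality is the log-sum inequality
on each fibre.
-/

namespace Real

lemma sub_le_mul_log_div {x y : ℝ} (hx : 0 ≤ x) (hy : 0 < y) : x - y ≤ x * log (x / y) := by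
  rcases hx.eq_or_lt with rfl | hx
  · simpa using hy.le
  have := one_sub_inv_le_log_of_pos (div_pos hx hy)
  rw [inv_div] at this
  calc x - y = x * (1 - y / x) := by field_simp
    _ ≤ x * log (x / y) := by gcongr

lemma sum_mul_log_div_sum_le {ι : Type*} (s : Finset ι) {w t : ι → ℝ}
    (hw : ∀ i ∈ s, 0 < w i) (ht : ∀ i ∈ s, 0 < t i) :
    (∑ i ∈ s, w i) * log ((∑ i ∈ s, w i) / ∑ i ∈ s, t i) ≤
      ∑ i ∈ s, w i * log (w i / t i) := by
  rcases s.eq_empty_or_nonempty with rfl | hs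
  · simp
  set W := ∑ i ∈ s, w i
  set T := ∑ i ∈ s, t i
  have hW : 0 < W := sum_pos hw hs
  have hT : 0 < T := sum_pos ht hs
  -- Compare `w` with the rescaled `t * (W / T)`, which has the same total mass `W`.
  have termwise :
      ∀ i ∈ s, w i - t i * (W / T) ≤ w i * log (w i / t i) - w i * log (W / T) := by
    intro i hi
    rw [← mul_sub, ← log_div (div_pos (hw i hi) (ht i hi)).ne' (div_pos hW hT).ne', div_div]
    exact sub_le_mul_log_div (hw i hi).le (mul_pos (ht i hi) (div_pos hW hT))
  have := sum_le_sum termwise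
  rw [sum_sub_distrib, sum_sub_distrib, ← sum_mul, ← sum_mul, mul_div_cancel₀ _ hT.ne',
    sub_self] at this
  linarith

end Real

lemma Finset.sum_fiberwise_mul_log_div_le {ι κ : Type*} [Fintype ι] [Fintype κ] [DecidableEq κ]
    (g : ι → κ) {w t : ι → ℝ} (hw : ∀ i, 0 < w i) (ht : ∀ i, 0 < t i) :
    ∑ j, (∑ i with g i = j, w i) *
        Real.log ((∑ i with g i = j, w i) / ∑ i with g i = j, t i) ≤
      ∑ i, w i * Real.log (w i / t i) := by
  rw [← sum_fiberwise univ g]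
  exact sum_le_sum fun j _ => Real.sum_mul_log_div_sum_le _ (fun i _ => hw i) (fun i _ => ht i)

lemma Finset.sum_filter_prodMap_eq {α β γ δ M : Type*} [Fintype α] [Fintype β]
    [DecidableEq γ] [DecidableEq δ] [AddCommMonoid M] (f : α → γ) (g : β → δ) (y : γ × δ)
    (u : α × β → M) :
    ∑ x with Prod.map f g x = y, u x = ∑ a with f a = y.1, ∑ b with g b = y.2, u (a, b) := by
  rw [← sum_product', ← filter_product, ← univ_product_univ]
  simp only [Prod.ext_iff, Prod.map_fst, Prod.map_snd]

section Merging

variable {m : ℕ}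

def edgeMass (p : Fin m → ℝ) (L : Fin m → Fin m → ℝ) (x : Fin m × Fin m) : ℝ :=
  p x.1 * p x.2 * L x.1 x.2

def nodeMass (p : Fin m → ℝ) (L : Fin m → Fin m → ℝ) (a : Fin m) : ℝ :=
  p a * rowSum L p a

lemma nodeMass_eq_sum_edgeMass (p : Fin m → ℝ) (L : Fin m → Fin m → ℝ) (a : Fin m) :
    nodeMass p L a = ∑ b, edgeMass p L (a, b) := by
  simp only [nodeMass, edgeMass, rowSum, mul_sum]
  exact sum_congr rfl fun b _ => by ring

lemma F_eq_sum_edgeMass (p : Fin m → ℝ) (L : Fin m → Fin m → ℝ) :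
    F p L = ∑ x, edgeMass p L x *
      Real.log (edgeMass p L x / (nodeMass p L x.1 * nodeMass p L x.2)) := by
  rw [Fintype.sum_prod_type]
  refine sum_congr rfl fun a _ => sum_congr rfl fun b _ => ?_
  simp only [edgeMass, nodeMass]
  by_cases hpp : p a * p b = 0
  · simp [hpp]
  rw [show p a * rowSum L p a * (p b * rowSum L p b) =
      p a * p b * (rowSum L p a * rowSum L p b) by ring, mul_div_mul_left _ _ hpp]

variable {k : ℕ} (h : Fin m → Fin k) {p : Fin m → ℝ} (L : Fin m → Fin m → ℝ)

lemma edgeMass_mergedPi_mergedLambda (hp : ∀ c, mergedPi h p c ≠ 0) (y : Fin k × Fin k) :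
    edgeMass (mergedPi h p) (mergedLambda h p L) y =
      ∑ x with Prod.map h h x = y, edgeMass p L x := by
  rw [edgeMass, mergedLambda, mul_div_cancel₀ _ (mul_ne_zero (hp _) (hp _)),
    sum_filter_prodMap_eq]
  rfl

lemma nodeMass_mergedPi_mergedLambda (hp : ∀ c, mergedPi h p c ≠ 0) (c : Fin k) :
    nodeMass (mergedPi h p) (mergedLambda h p L) c = ∑ a with h a = c, nodeMass p L a := by
  simp only [nodeMass_eq_sum_edgeMass, edgeMass_mergedPi_mergedLambda h L hp,
    sum_filter_prodMap_eq]
  rw [sum_comm]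
  exact sum_congr rfl fun a _ => sum_fiberwise univ h _

end Merging

theorem merging_decreases_F_general (k k0 : ℕ)
    (p : Fin k0 → ℝ) (hp : ∀ a, 0 < p a)
    (L : Fin k0 → Fin k0 → ℝ) (hLpos : ∀ a b, 0 < L a b)
    (h : Fin k0 → Fin k) (hs : Function.Surjective h) :
    F (mergedPi h p) (mergedLambda h p L) ≤ F p L := by
  have hpos : ∀ c, mergedPi h p c ≠ 0 := fun c =>
    (sum_pos (fun a _ => hp a) (by obtain ⟨a, rfl⟩ := hs c; exact ⟨a, by simp⟩)).ne'
  have hedge : ∀ x, 0 < edgeMass p L x := fun x => by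
    have := hp x.1; have := hp x.2; have := hLpos x.1 x.2; unfold edgeMass; positivity
  have hnode : ∀ a, 0 < nodeMass p L a := fun a => by
    rw [nodeMass_eq_sum_edgeMass]; exact sum_pos (fun b _ => hedge _) ⟨a, mem_univ a⟩
  rw [F_eq_sum_edgeMass, F_eq_sum_edgeMass]
  refine (sum_congr rfl fun y _ => ?_).trans_le <|
    sum_fiberwise_mul_log_div_le (Prod.map h h) hedge
      (t := fun x => nodeMass p L x.1 * nodeMass p L x.2) fun x => mul_pos (hnode _) (hnode _)
  rw [edgeMass_mergedPi_mergedLambda h L hpos, nodeMass_mergedPi_mergedLambda h L hpos,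
    nodeMass_mergedPi_mergedLambda h L hpos,
    sum_filter_prodMap_eq _ _ _ (fun x => nodeMass p L x.1 * nodeMass p L x.2), sum_mul_sum]

/-- merging communities can only decrease `F`. -/
theorem merging_decreases_F (k k0 : ℕ) (hk : 1 ≤ k) (hkk0 : k ≤ k0)
    (p : Fin k0 → ℝ) (hp : ∀ a, 0 < p a) (hp1 : ∑ a, p a = 1)
    (L : Fin k0 → Fin k0 → ℝ) (hLsym : ∀ a b, L a b = L b a)
    (hLpos : ∀ a b, 0 < L a b)
    (h : Fin k0 → Fin k) (hs : Function.Surjective h) :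
    F (mergedPi h p) (mergedLambda h p L) ≤ F p L :=
  merging_decreases_F_general k k0 p hp L hLpos h hs
end

section
/- Let 1 ≤ k < k_0 be integers, let π ∈ ℝ^{k_0} have strictly positive entries with Σ_a π_a = 1, let λ ∈ ℝ^{k_0×k_0} be symmetric with strictly positive entries such that no two distinct columns of λ are proportional (i.e., for all a ≠ b there is no constant c > 0 with λ_{ia} = c·λ_{ib} for every i), and let h : {1,…,k_0} → {1,…,k} be surjective. Then F(π, λ) > F(π*, λ*), where (π*, λ*) are the parameters obtained by merging the communities according to h; in particular the difference F(π, λ) − F(π*, λ*) is strictly positive. -/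
open Finset

/-!
With `ν_{ab} = π_a π_b λ_{ab}` and row marginals `σ_a = Σ_b ν_{ab} = π_a [λπ]_a`, `F(π, λ)` is the
relative entropy of `ν` with respect to `σ ⊗ σ`, and merging replaces both by their pushforwards
along `h × h`. The log-sum inequality on each fibre gives the data processing inequality. Since
`k < k₀`, two communities `a ≠ b` are merged, and as their columns are not proportional some row `i`
has `ν/(σ ⊗ σ)` different at `(i, a)` and `(i, b)`, which makes the fibre of `(h i, h a)` strict.
-/

open Real

section LogSum

variable {ι : Type*} {t : Finset ι} {w z : ι → ℝ}

lemma sub_le_mul_log_div {w z : ℝ} (hw : 0 < w) (hz : 0 < z) : w - z ≤ w * log (w / z) := by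
  have key := one_sub_inv_le_log_of_pos (div_pos hw hz)
  rw [inv_div] at key
  calc w - z = w * (1 - z / w) := by field_simp
    _ ≤ w * log (w / z) := mul_le_mul_of_nonneg_left key hw.le

lemma sub_lt_mul_log_div {w z : ℝ} (hw : 0 < w) (hz : 0 < z) (hwz : w ≠ z) :
    w - z < w * log (w / z) := by
  have key := log_lt_sub_one_of_pos (div_pos hz hw)
    (by rwa [ne_eq, div_eq_one_iff_eq hw.ne', eq_comm])
  rw [← inv_div, log_inv, inv_div] at key
  calc w - z = w * (1 - z / w) := by field_simp
    _ < w * log (w / z) := mul_lt_mul_of_pos_left (by linarith) hw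

theorem sum_mul_log_div_nonneg (hw : ∀ i ∈ t, 0 < w i) (hz : ∀ i ∈ t, 0 < z i)
    (hsum : ∑ i ∈ t, w i = ∑ i ∈ t, z i) : 0 ≤ ∑ i ∈ t, w i * log (w i / z i) :=
  calc 0 = ∑ i ∈ t, (w i - z i) := by rw [sum_sub_distrib, hsum, sub_self]
    _ ≤ _ := sum_le_sum fun i hi => sub_le_mul_log_div (hw i hi) (hz i hi)

theorem sum_mul_log_div_pos (hw : ∀ i ∈ t, 0 < w i) (hz : ∀ i ∈ t, 0 < z i)
    (hsum : ∑ i ∈ t, w i = ∑ i ∈ t, z i) (hne : ∃ i ∈ t, w i ≠ z i) :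
    0 < ∑ i ∈ t, w i * log (w i / z i) := by
  obtain ⟨i, hi, hwz⟩ := hne
  calc 0 = ∑ i ∈ t, (w i - z i) := by rw [sum_sub_distrib, hsum, sub_self]
    _ < _ := sum_lt_sum (fun i hi => sub_le_mul_log_div (hw i hi) (hz i hi))
      ⟨i, hi, sub_lt_mul_log_div (hw i hi) (hz i hi) hwz⟩

/-- Rescaling `z` by `W / Z` reduces the log-sum inequality to Gibbs' inequality. -/
lemma sum_mul_log_div_sub_eq (ht : t.Nonempty) (hw : ∀ i ∈ t, 0 < w i)
    (hz : ∀ i ∈ t, 0 < z i) :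
    ∑ i ∈ t, w i * log (w i / z i) - (∑ i ∈ t, w i) * log ((∑ i ∈ t, w i) / ∑ i ∈ t, z i) =
      ∑ i ∈ t, w i * log (w i / (z i * ((∑ i ∈ t, w i) / ∑ i ∈ t, z i))) := by
  have hW := (sum_pos hw ht).ne'
  have hZ := (sum_pos hz ht).ne'
  rw [sum_mul, ← sum_sub_distrib]
  refine sum_congr rfl fun i hi => ?_
  rw [← div_div, log_div (div_ne_zero (hw i hi).ne' (hz i hi).ne') (div_ne_zero hW hZ), mul_sub]

lemma sum_mul_sum_div_sum (ht : t.Nonempty) (hz : ∀ i ∈ t, 0 < z i) :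
    ∑ i ∈ t, z i * ((∑ i ∈ t, w i) / ∑ i ∈ t, z i) = ∑ i ∈ t, w i := by
  rw [← sum_mul, mul_div_cancel₀ _ (sum_pos hz ht).ne']

theorem sum_mul_log_sum_div_sum_le (hw : ∀ i ∈ t, 0 < w i) (hz : ∀ i ∈ t, 0 < z i) :
    (∑ i ∈ t, w i) * log ((∑ i ∈ t, w i) / ∑ i ∈ t, z i) ≤
      ∑ i ∈ t, w i * log (w i / z i) := by
  rcases t.eq_empty_or_nonempty with rfl | ht
  · simp
  rw [← sub_nonneg, sum_mul_log_div_sub_eq ht hw hz]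
  exact sum_mul_log_div_nonneg hw (fun i hi => mul_pos (hz i hi) (div_pos (sum_pos hw ht)
    (sum_pos hz ht))) (sum_mul_sum_div_sum ht hz).symm

theorem sum_mul_log_sum_div_sum_lt (hw : ∀ i ∈ t, 0 < w i) (hz : ∀ i ∈ t, 0 < z i)
    (hne : ∃ i ∈ t, ∃ j ∈ t, w i / z i ≠ w j / z j) :
    (∑ i ∈ t, w i) * log ((∑ i ∈ t, w i) / ∑ i ∈ t, z i) <
      ∑ i ∈ t, w i * log (w i / z i) := by
  obtain ⟨i, hi, j, hj, hij⟩ := hne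
  have ht : t.Nonempty := ⟨i, hi⟩
  rw [← sub_pos, sum_mul_log_div_sub_eq ht hw hz]
  refine sum_mul_log_div_pos hw (fun i hi => mul_pos (hz i hi) (div_pos (sum_pos hw ht)
    (sum_pos hz ht))) (sum_mul_sum_div_sum ht hz).symm ?_
  by_contra! hall
  rw [hall i hi, hall j hj, mul_div_cancel_left₀ _ (hz i hi).ne',
    mul_div_cancel_left₀ _ (hz j hj).ne'] at hij
  exact hij rfl

end LogSum

section Pushforward

variable {α β γ δ : Type*}

noncomputable def relEntropy [Fintype α] (ν μ : α → ℝ) : ℝ := ∑ x, ν x * log (ν x / μ x)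

def pushSum [Fintype α] [DecidableEq β] (f : α → β) (ν : α → ℝ) (y : β) : ℝ :=
  ∑ x with f x = y, ν x

def rowMarginal [Fintype γ] (ν : α × γ → ℝ) (a : α) : ℝ := ∑ c, ν (a, c)

def rowMarginalProd [Fintype α] (ν : α × α → ℝ) (x : α × α) : ℝ :=
  rowMarginal ν x.1 * rowMarginal ν x.2

theorem relEntropy_pushSum_lt [Fintype α] [Fintype β] [DecidableEq β] {ν μ : α → ℝ}
    (f : α → β) (hν : ∀ x, 0 < ν x) (hμ : ∀ x, 0 < μ x)
    (hne : ∃ x y, f x = f y ∧ ν x / μ x ≠ ν y / μ y) :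
    relEntropy (pushSum f ν) (pushSum f μ) < relEntropy ν μ := by
  obtain ⟨x, y, hxy, hratio⟩ := hne
  rw [relEntropy, relEntropy, ← sum_fiberwise univ f fun x => ν x * log (ν x / μ x)]
  refine sum_lt_sum (fun b _ => sum_mul_log_sum_div_sum_le (fun x _ => hν x) fun x _ => hμ x)
    ⟨f x, mem_univ _, sum_mul_log_sum_div_sum_lt (fun x _ => hν x) (fun x _ => hμ x)
      ⟨x, by simp, y, by simp [hxy], hratio⟩⟩

lemma pushSum_prodMap [Fintype α] [Fintype γ] [DecidableEq β] [DecidableEq δ] (f : α → β)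
    (g : γ → δ) (ν : α × γ → ℝ) (b : β) (d : δ) :
    pushSum (Prod.map f g) ν (b, d) = ∑ a with f a = b, ∑ c with g c = d, ν (a, c) := by
  rw [pushSum, ← sum_product', ← filter_product, ← univ_product_univ]
  simp only [Prod.map, Prod.mk.injEq]

lemma rowMarginal_pushSum [Fintype α] [Fintype γ] [Fintype δ] [DecidableEq β] [DecidableEq δ]
    (f : α → β) (g : γ → δ) (ν : α × γ → ℝ) :
    rowMarginal (pushSum (Prod.map f g) ν) = pushSum f (rowMarginal ν) := by
  funext b
  calc ∑ d, pushSum (Prod.map f g) ν (b, d)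
      = ∑ d, ∑ a with f a = b, ∑ c with g c = d, ν (a, c) := by simp only [pushSum_prodMap]
    _ = ∑ a with f a = b, ∑ c, ν (a, c) := by
      rw [sum_comm]
      exact sum_congr rfl fun a _ => sum_fiberwise univ g fun c => ν (a, c)

lemma rowMarginalProd_pushSum [Fintype α] [Fintype β] [DecidableEq β] (f : α → β)
    (ν : α × α → ℝ) :
    rowMarginalProd (pushSum (Prod.map f f) ν) = pushSum (Prod.map f f) (rowMarginalProd ν) := by
  funext ⟨b, d⟩
  rw [rowMarginalProd, rowMarginal_pushSum, pushSum_prodMap, pushSum, pushSum, sum_mul_sum]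
  rfl

lemma rowMarginal_pos [Fintype γ] [Nonempty γ] {ν : α × γ → ℝ} (hν : ∀ x, 0 < ν x) (a : α) :
    0 < rowMarginal ν a :=
  sum_pos (fun c _ => hν (a, c)) univ_nonempty

end Pushforward

def jointWeight {α : Type*} (p : α → ℝ) (L : α → α → ℝ) (x : α × α) : ℝ :=
  p x.1 * p x.2 * L x.1 x.2

section Merging

variable {m k k0 : ℕ}

lemma rowMarginal_jointWeight (p : Fin m → ℝ) (L : Fin m → Fin m → ℝ) (a : Fin m) :
    rowMarginal (jointWeight p L) a = p a * rowSum L p a := by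
  rw [rowMarginal, rowSum, mul_sum]
  exact sum_congr rfl fun b _ => by rw [jointWeight]; ring

lemma jointWeight_div_rowMarginalProd (p : Fin m → ℝ) (L : Fin m → Fin m → ℝ)
    {x : Fin m × Fin m} (h1 : p x.1 ≠ 0) (h2 : p x.2 ≠ 0) :
    jointWeight p L x / rowMarginalProd (jointWeight p L) x =
      L x.1 x.2 / (rowSum L p x.1 * rowSum L p x.2) := by
  rw [rowMarginalProd, rowMarginal_jointWeight, rowMarginal_jointWeight, jointWeight,
    mul_mul_mul_comm, mul_div_mul_left _ _ (mul_ne_zero h1 h2)]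

theorem F_eq_relEntropy (p : Fin m → ℝ) (L : Fin m → Fin m → ℝ) :
    F p L = relEntropy (jointWeight p L) (rowMarginalProd (jointWeight p L)) := by
  rw [F, relEntropy, Fintype.sum_prod_type]
  refine sum_congr rfl fun a _ => sum_congr rfl fun b _ => ?_
  by_cases ha : p a = 0
  · simp [jointWeight, ha]
  by_cases hb : p b = 0
  · simp [jointWeight, hb]
  rw [jointWeight_div_rowMarginalProd p L (x := (a, b)) ha hb, jointWeight]

lemma mergedPi_pos {h : Fin k0 → Fin k} {p : Fin k0 → ℝ} (hp : ∀ a, 0 < p a)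
    (hs : Function.Surjective h) (c : Fin k) : 0 < mergedPi h p c := by
  obtain ⟨a, rfl⟩ := hs c
  exact sum_pos (fun a _ => hp a) ⟨a, by simp⟩

lemma jointWeight_merged {h : Fin k0 → Fin k} {p : Fin k0 → ℝ} (hp : ∀ a, 0 < p a)
    (hs : Function.Surjective h) (L : Fin k0 → Fin k0 → ℝ) :
    jointWeight (mergedPi h p) (mergedLambda h p L) =
      pushSum (Prod.map h h) (jointWeight p L) := by
  funext ⟨c, d⟩
  rw [pushSum_prodMap, jointWeight, mergedLambda,
    mul_div_cancel₀ _ (mul_pos (mergedPi_pos hp hs c) (mergedPi_pos hp hs d)).ne']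
  rfl

lemma exists_div_ne_of_not_proportional {L : Fin m → Fin m → ℝ} {r : Fin m → ℝ}
    (hr : ∀ i, 0 < r i) {a b : Fin m} (hL : ¬∃ c : ℝ, 0 < c ∧ ∀ i, L i a = c * L i b) :
    ∃ i, L i a / (r i * r a) ≠ L i b / (r i * r b) := by
  by_contra! H
  refine hL ⟨r a / r b, div_pos (hr a) (hr b), fun i => ?_⟩
  have hi := H i
  have := (hr i).ne'
  have := (hr a).ne'
  have := (hr b).ne'
  field_simp at hi ⊢
  linear_combination hi

end Merging

theorem merging_strictly_decreases_F_general (k k0 : ℕ) (hkk0 : k < k0)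
    (p : Fin k0 → ℝ) (hp : ∀ a, 0 < p a)
    (L : Fin k0 → Fin k0 → ℝ)
    (hLpos : ∀ a b, 0 < L a b)
    (hident : ∀ a b : Fin k0, a ≠ b →
      ¬ ∃ c : ℝ, 0 < c ∧ ∀ i, L i a = c * L i b)
    (h : Fin k0 → Fin k) (hs : Function.Surjective h) :
    F (mergedPi h p) (mergedLambda h p L) < F p L := by
  have : Nonempty (Fin k0) := ⟨⟨0, by omega⟩⟩
  have hν : ∀ x, 0 < jointWeight p L x := fun x => mul_pos (mul_pos (hp _) (hp _)) (hLpos _ _)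
  have hr : ∀ a, 0 < rowSum L p a := fun a =>
    sum_pos (fun b _ => mul_pos (hLpos a b) (hp b)) univ_nonempty
  obtain ⟨a, b, hab, hhab⟩ := Fintype.exists_ne_map_eq_of_card_lt h (by simpa using hkk0)
  obtain ⟨i, hi⟩ := exists_div_ne_of_not_proportional hr (hident a b hab)
  rw [F_eq_relEntropy, F_eq_relEntropy, jointWeight_merged hp hs, rowMarginalProd_pushSum]
  refine relEntropy_pushSum_lt _ hν
    (fun x => mul_pos (rowMarginal_pos hν x.1) (rowMarginal_pos hν x.2))
    ⟨(i, a), (i, b), by simp [hhab], ?_⟩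
  rwa [jointWeight_div_rowMarginalProd p L (hp i).ne' (hp a).ne',
    jointWeight_div_rowMarginalProd p L (hp i).ne' (hp b).ne']

/-- under identifiability (no two distinct columns of `λ` are
proportional), merging strictly fewer communities strictly decreases `F`. -/
theorem merging_strictly_decreases_F (k k0 : ℕ) (hk : 1 ≤ k) (hkk0 : k < k0)
    (p : Fin k0 → ℝ) (hp : ∀ a, 0 < p a) (hp1 : ∑ a, p a = 1)
    (L : Fin k0 → Fin k0 → ℝ) (hLsym : ∀ a b, L a b = L b a)
    (hLpos : ∀ a b, 0 < L a b)
    (hident : ∀ a b : Fin k0, a ≠ b →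
      ¬ ∃ c : ℝ, 0 < c ∧ ∀ i, L i a = c * L i b)
    (h : Fin k0 → Fin k) (hs : Function.Surjective h) :
    F (mergedPi h p) (mergedLambda h p L) < F p L :=
  merging_strictly_decreases_F_general k k0 hkk0 p hp L hLpos hident h hs
end

section
/- Let 𝒳 be a countable set, let μ : 𝒳 → [0, ∞) satisfy Σ_{x ∈ 𝒳} μ(x) = 1, let Ω ⊆ 𝒳, and let 1 ≤ k_0 ≤ n be integers. For each k ∈ {1,…,n} let q_k : 𝒳 → [0, ∞) satisfy Σ_{x ∈ 𝒳} q_k(x) ≤ 1. Let pen : {1,…,n} → ℝ and A ∈ ℝ be such that μ(x) ≤ q_{k_0}(x) · e^{A} for every x ∈ Ω. Then Σ_{x ∈ Ω} μ(x) · 1{ ∃ k ∈ {k_0+1,…,n} : q_k(x) · e^{−pen(k)} ≥ q_{k_0}(x) · e^{−pen(k_0)} } ≤ Σ_{k = k_0+1}^{n} e^{ A + pen(k_0) − pen(k) }. -/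
open scoped Classical

/-- abstract non-overestimation bound. If `μ` is a probability
mass function on a countable set, each `q_k` is a sub-probability mass
function, and `μ(x) ≤ q_{k₀}(x) e^A` on `Ω`, then the `μ`-mass of the points of
`Ω` on which some over-penalized `q_k` (`k > k₀`) beats `q_{k₀}` is at most
`Σ_{k=k₀+1}^n e^{A + pen(k₀) − pen(k)}`. -/
theorem overestimation_mass_bound {X : Type*} [Countable X]
    (μ : X → ℝ) (hμ0 : ∀ x, 0 ≤ μ x) (hμs : Summable μ)
    (hμ1 : ∑' x, μ x = 1)
    (Ω : Set X) (k0 n : ℕ) (hk0 : 1 ≤ k0) (hk0n : k0 ≤ n)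
    (q : ℕ → X → ℝ)
    (hq0 : ∀ k ∈ Finset.Icc 1 n, ∀ x, 0 ≤ q k x)
    (hqs : ∀ k ∈ Finset.Icc 1 n, Summable (q k))
    (hq1 : ∀ k ∈ Finset.Icc 1 n, ∑' x, q k x ≤ 1)
    (pen : ℕ → ℝ) (A : ℝ)
    (hA : ∀ x ∈ Ω, μ x ≤ q k0 x * Real.exp A) :
    ∑' x : X,
        (if x ∈ Ω ∧ ∃ k ∈ Finset.Icc (k0 + 1) n,
            q k0 x * Real.exp (-pen k0) ≤ q k x * Real.exp (-pen k)
          then μ x else 0) ≤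
      ∑ k ∈ Finset.Icc (k0 + 1) n, Real.exp (A + pen k0 - pen k) := by
  set F : X → ℝ := fun x =>
    if x ∈ Ω ∧ ∃ k ∈ Finset.Icc (k0 + 1) n,
        q k0 x * Real.exp (-pen k0) ≤ q k x * Real.exp (-pen k)
      then μ x else 0 with hF
  have hsub : ∀ k ∈ Finset.Icc (k0 + 1) n, k ∈ Finset.Icc 1 n := by
    intro k hk
    simp only [Finset.mem_Icc] at *
    omega
  set G : ℕ → X → ℝ := fun k x => Real.exp (A + pen k0 - pen k) * q k x with hG
  have hG0 : ∀ k ∈ Finset.Icc (k0 + 1) n, ∀ x, 0 ≤ G k x := fun k hk x =>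
    mul_nonneg (Real.exp_pos _).le (hq0 k (hsub k hk) x)
  have hle : ∀ x, F x ≤ ∑ k ∈ Finset.Icc (k0 + 1) n, G k x := by
    intro x
    by_cases h : x ∈ Ω ∧ ∃ k ∈ Finset.Icc (k0 + 1) n,
        q k0 x * Real.exp (-pen k0) ≤ q k x * Real.exp (-pen k)
    · obtain ⟨hx, k', hk', hq'⟩ := h
      have h1 : μ x ≤ G k' x := by
        have h2 := hA x hx
        have h3 := mul_le_mul_of_nonneg_right hq' (Real.exp_pos (A + pen k0)).le
        calc μ x ≤ q k0 x * Real.exp A := h2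
          _ = q k0 x * Real.exp (-pen k0) * Real.exp (A + pen k0) := by
              rw [mul_assoc, ← Real.exp_add]; ring_nf
          _ ≤ q k' x * Real.exp (-pen k') * Real.exp (A + pen k0) := h3
          _ = G k' x := by
              simp only [hG]
              rw [mul_assoc, ← Real.exp_add]; ring_nf
      calc F x = μ x := if_pos ⟨hx, k', hk', hq'⟩
        _ ≤ G k' x := h1
        _ ≤ ∑ k ∈ Finset.Icc (k0 + 1) n, G k x :=
            Finset.single_le_sum (fun k hk => hG0 k hk x) hk'
    · rw [show F x = 0 from if_neg h]
      exact Finset.sum_nonneg fun k hk => hG0 k hk x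
  have hF0 : ∀ x, 0 ≤ F x := by
    intro x; simp only [hF]; split
    · exact hμ0 x
    · exact le_rfl
  have hFμ : ∀ x, F x ≤ μ x := by
    intro x; simp only [hF]; split
    · exact le_rfl
    · exact hμ0 x
  have hFs : Summable F := hμs.of_nonneg_of_le hF0 hFμ
  have hGs : ∀ k ∈ Finset.Icc (k0 + 1) n, Summable (G k) := fun k hk =>
    (hqs k (hsub k hk)).mul_left _
  calc ∑' x, F x
      ≤ ∑' x, ∑ k ∈ Finset.Icc (k0 + 1) n, G k x :=
        Summable.tsum_le_tsum hle hFs (summable_sum hGs)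
    _ = ∑ k ∈ Finset.Icc (k0 + 1) n, ∑' x, G k x := Summable.tsum_finsetSum hGs
    _ ≤ ∑ k ∈ Finset.Icc (k0 + 1) n, Real.exp (A + pen k0 - pen k) := by
        refine Finset.sum_le_sum fun k hk => ?_
        rw [hG]
        rw [tsum_mul_left]
        calc Real.exp (A + pen k0 - pen k) * ∑' x, q k x
            ≤ Real.exp (A + pen k0 - pen k) * 1 :=
              mul_le_mul_of_nonneg_left (hq1 k (hsub k hk)) (Real.exp_pos _).le
          _ = _ := mul_one _
end
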